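/- arXiv:1301.6321 — 2 statements merged into one kernel-verified Lean document; each statement's English description precedes it below -/
import Mathlib

section
/- Assume y₀ ≠ 0 and hypotheses (EC), (BB), (ET). Then T_{M_T} = T for every T > 0 and M_{T_M} = M for every M > 0; consequently the map T ↦ M_T is the inverse of the map M ↦ T_M. -/
open MeasureTheory Set Filter Topology

noncomputable section

variable {H : Type*} [NormedAddCommGroup H] [InnerProductSpace ℂ H] [CompleteSpace H]
  [SecondCountableTopology H]

/-- `U` is a strongly continuous one-parameter group of unitary operators on `H`,
abstracting the Schrödinger group `e^{-iΔt}`. -/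
def IsUnitaryGroup (U : ℝ → H →L[ℂ] H) : Prop :=
  U 0 = ContinuousLinearMap.id ℂ H ∧
  (∀ s t : ℝ, U (s + t) = (U s).comp (U t)) ∧
  (∀ (t : ℝ) (x : H), ‖U t x‖ = ‖x‖) ∧
  ∀ x : H, Continuous fun t : ℝ => U t x

/-- `B` is a nonzero orthogonal projection on `H`, abstracting multiplication by `χ_ω`. -/
def IsOrthProj (B : H →L[ℂ] H) : Prop :=
  B ≠ 0 ∧ B.comp B = B ∧ ∀ x y : H, (inner ℂ (B x) y : ℂ) = inner ℂ x (B y)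

/-- Membership in `L∞((a,b);H)`. -/
def MemLinfty (u : ℝ → H) (a b : ℝ) : Prop :=
  AEStronglyMeasurable u (volume : Measure ℝ) ∧
    ∃ c : ℝ, ∀ᵐ t : ℝ ∂volume, t ∈ Ioo a b → ‖u t‖ ≤ c

/-- Membership in `L∞((0,∞);H)`. -/
def MemLinftyInf (u : ℝ → H) : Prop :=
  AEStronglyMeasurable u (volume : Measure ℝ) ∧
    ∃ c : ℝ, ∀ᵐ t : ℝ ∂volume, t ∈ Ioi (0 : ℝ) → ‖u t‖ ≤ c

/-- The `L∞((a,b);H)` norm of `u`. -/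
def supNorm (u : ℝ → H) (a b : ℝ) : ℝ :=
  sInf {c : ℝ | 0 ≤ c ∧ ∀ᵐ t : ℝ ∂volume, t ∈ Ioo a b → ‖u t‖ ≤ c}

/-- `stateT U B T τ u y₀ = y(T; χ_{(τ,T)}u, y₀)`, the mild solution at time `T` of the
controlled Schrödinger equation with initial state `y₀`, the control acting on `(τ,T)`:
`y(T) = U(T)y₀ + ∫_τ^T U(T-s) B u(s) ds`.  The free state at time `t` starting from `y₀`
with control `u` active from time `0` is `stateT U B t 0 u y₀`. -/
def stateT (U : ℝ → H →L[ℂ] H) (B : H →L[ℂ] H) (T τ : ℝ) (u : ℝ → H) (y₀ : H) : H :=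
  U T y₀ + ∫ s in Ioo τ T, U (T - s) (B (u s))

/-- Hypothesis (EC): `L∞`-exact controllability with cost. -/
def EC (U : ℝ → H →L[ℂ] H) (B : H →L[ℂ] H) : Prop :=
  ∀ τ : ℝ, 0 < τ → ∃ C : ℝ, 0 < C ∧ ∀ y₀ z : H, ∃ u : ℝ → H,
    AEStronglyMeasurable u (volume : Measure ℝ) ∧
    (∀ᵐ t : ℝ ∂volume, t ∈ Ioo 0 τ → ‖u t‖ ≤ C * ‖z - U τ y₀‖) ∧
    stateT U B τ 0 u y₀ = z

/-- Hypothesis (UC): unique continuation. -/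
def UC (U : ℝ → H →L[ℂ] H) (B : H →L[ℂ] H) : Prop :=
  ∀ η : H, η ≠ 0 → volume {t : ℝ | B (U t η) = 0} = 0

/-- The admissible set `U_M` of the minimal time problem `(TOCP)_M`. -/
def UMset (U : ℝ → H →L[ℂ] H) (B : H →L[ℂ] H) (y₀ : H) (M : ℝ) : Set (ℝ → H) :=
  {u | MemLinftyInf u ∧ (∀ᵐ t : ℝ ∂volume, t ∈ Ioi (0 : ℝ) → ‖u t‖ ≤ M) ∧
    ∃ s : ℝ, 0 < s ∧ stateT U B s 0 u y₀ = 0}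

/-- The minimal time `T_M` of `(TOCP)_M`. -/
def Tmin (U : ℝ → H →L[ℂ] H) (B : H →L[ℂ] H) (y₀ : H) (M : ℝ) : ℝ :=
  sInf {s : ℝ | 0 < s ∧ ∃ u ∈ UMset U B y₀ M, stateT U B s 0 u y₀ = 0}

/-- The admissible set `V_T` of the minimal norm problem `(NOCP)_T`. -/
def VTset (U : ℝ → H →L[ℂ] H) (B : H →L[ℂ] H) (y₀ : H) (T : ℝ) : Set (ℝ → H) :=
  {v | MemLinfty v 0 T ∧ stateT U B T 0 v y₀ = 0}

/-- The minimal norm `M_T` of `(NOCP)_T`. -/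
def Mmin (U : ℝ → H →L[ℂ] H) (B : H →L[ℂ] H) (y₀ : H) (T : ℝ) : ℝ :=
  sInf ((fun v : ℝ → H => supNorm v 0 T) '' VTset U B y₀ T)

/-- Hypothesis (BB): bang-bang property of the minimal time problems. -/
def BB (U : ℝ → H →L[ℂ] H) (B : H →L[ℂ] H) : Prop :=
  ∀ y₀ : H, y₀ ≠ 0 → ∀ M : ℝ, 0 < M → ∀ u ∈ UMset U B y₀ M,
    stateT U B (Tmin U B y₀ M) 0 u y₀ = 0 →
    ∀ᵐ t : ℝ ∂volume, t ∈ Ioo 0 (Tmin U B y₀ M) → ‖u t‖ = M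

/-- Hypothesis (ET): existence of optimal controls for the minimal time problems. -/
def ET (U : ℝ → H →L[ℂ] H) (B : H →L[ℂ] H) : Prop :=
  ∀ y₀ : H, y₀ ≠ 0 → ∀ M : ℝ, 0 < M →
    ∃ u ∈ UMset U B y₀ M, stateT U B (Tmin U B y₀ M) 0 u y₀ = 0

/-- The admissible set `U_{M,τ}`. -/
def UadmSet (M τ T : ℝ) : Set (ℝ → H) :=
  {u | MemLinfty u 0 T ∧ ∀ᵐ t : ℝ ∂volume, t ∈ Ioo τ T → ‖u t‖ ≤ M}

/-- The optimal distance `r(M,τ)` of the optimal target problem `(OP)^{M,τ}`. -/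
def rOP (U : ℝ → H →L[ℂ] H) (B : H →L[ℂ] H) (y₀ z_d : H) (T M τ : ℝ) : ℝ :=
  sInf ((fun u : ℝ → H => ‖stateT U B T τ u y₀ - z_d‖) '' UadmSet M τ T)

/-- `u` is an optimal control to `(OP)^{M,τ}`. -/
def IsOptOP (U : ℝ → H →L[ℂ] H) (B : H →L[ℂ] H) (y₀ z_d : H) (T M τ : ℝ) (u : ℝ → H) :
    Prop :=
  u ∈ UadmSet M τ T ∧ ‖stateT U B T τ u y₀ - z_d‖ = rOP U B y₀ z_d T M τ

/-- `M^τ`, the minimal norm for exact steering to the target `z_d`. -/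
def Mtau (U : ℝ → H →L[ℂ] H) (B : H →L[ℂ] H) (y₀ z_d : H) (T τ : ℝ) : ℝ :=
  sInf ((fun u : ℝ → H => supNorm u τ T) ''
    {u : ℝ → H | MemLinfty u 0 T ∧ stateT U B T τ u y₀ = z_d})

/-- The admissible set `W_{τ,r}` of the optimal norm problem `(NP)^{τ,r}`. -/
def WadmSet (U : ℝ → H →L[ℂ] H) (B : H →L[ℂ] H) (y₀ z_d : H) (T τ r : ℝ) :
    Set (ℝ → H) :=
  {u | MemLinfty u 0 T ∧ ‖stateT U B T τ u y₀ - z_d‖ ≤ r}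

/-- The optimal norm `M(τ,r)` of `(NP)^{τ,r}`. -/
def MNP (U : ℝ → H →L[ℂ] H) (B : H →L[ℂ] H) (y₀ z_d : H) (T τ r : ℝ) : ℝ :=
  sInf ((fun u : ℝ → H => supNorm u τ T) '' WadmSet U B y₀ z_d T τ r)

/-- `u` is an optimal control to `(NP)^{τ,r}`. -/
def IsOptNP (U : ℝ → H →L[ℂ] H) (B : H →L[ℂ] H) (y₀ z_d : H) (T τ r : ℝ) (u : ℝ → H) :
    Prop :=
  u ∈ WadmSet U B y₀ z_d T τ r ∧ supNorm u τ T = MNP U B y₀ z_d T τ r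

/-- The admissible set `V_{M,r}` of the second type optimal time problem `(TP)^{M,r}`. -/
def VadmSet (U : ℝ → H →L[ℂ] H) (B : H →L[ℂ] H) (y₀ z_d : H) (T M r : ℝ) :
    Set (ℝ → H) :=
  {u | ∃ τ : ℝ, τ ∈ Ico (0 : ℝ) T ∧ u ∈ UadmSet M τ T ∧
    ‖stateT U B T τ u y₀ - z_d‖ ≤ r}

/-- `τ_{M,r}(u)`. -/
def tauOf (U : ℝ → H →L[ℂ] H) (B : H →L[ℂ] H) (y₀ z_d : H) (T r : ℝ) (u : ℝ → H) : ℝ :=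
  sSup {τ : ℝ | τ ∈ Ico (0 : ℝ) T ∧ ‖stateT U B T τ u y₀ - z_d‖ ≤ r}

/-- The optimal time `τ(M,r)` of `(TP)^{M,r}`. -/
def tauTP (U : ℝ → H →L[ℂ] H) (B : H →L[ℂ] H) (y₀ z_d : H) (T M r : ℝ) : ℝ :=
  sSup (tauOf U B y₀ z_d T r '' VadmSet U B y₀ z_d T M r)

/-- `u` is an optimal control to `(TP)^{M,r}`. -/
def IsOptTP (U : ℝ → H →L[ℂ] H) (B : H →L[ℂ] H) (y₀ z_d : H) (T M r : ℝ) (u : ℝ → H) :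
    Prop :=
  u ∈ VadmSet U B y₀ z_d T M r ∧
    ‖stateT U B T (tauTP U B y₀ z_d T M r) u y₀ - z_d‖ ≤ r

/-- The adjoint state `φ*(t) = U(t-T)(z_d - y(T; χ_{(τ,T)}u, y₀))`. -/
def adjState (U : ℝ → H →L[ℂ] H) (B : H →L[ℂ] H) (y₀ z_d : H) (T τ : ℝ) (u : ℝ → H)
    (t : ℝ) : H :=
  U (t - T) (z_d - stateT U B T τ u y₀)

/-!
(ET) and (BB) give `M_{T_M} = M`: an optimal control of `(TOCP)_M` is admissible for
`(NOCP)_{T_M}`, while an admissible control of `(NOCP)_{T_M}` of norm below `M`, extended by zero,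
would be an optimal control of `(TOCP)_M` that is not bang-bang. (EC) makes `T ↦ M_T` strictly
decreasing, hence injective, and an injective map with right inverse `M ↦ T_M` is inverted by it
on both sides.
-/

set_option linter.unusedSectionVars false

lemma le_mul_csInf_of_forall_le {S : Set ℝ} (hS : S.Nonempty) {a r : ℝ} (hr : 0 ≤ r)
    (h : ∀ s ∈ S, a ≤ r * s) : a ≤ r * sInf S := by
  rw [← smul_eq_mul, ← Real.sInf_smul_of_nonneg hr]
  exact le_csInf hS.smul_set fun _ ⟨s, hs, hrs⟩ => hrs ▸ h s hs

section

variable {U : ℝ → H →L[ℂ] H} {B : H →L[ℂ] H}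

namespace IsUnitaryGroup

lemma norm_apply (hU : IsUnitaryGroup U) (t : ℝ) (x : H) : ‖U t x‖ = ‖x‖ :=
  hU.2.2.1 t x

lemma apply_apply (hU : IsUnitaryGroup U) (a b : ℝ) (x : H) : U a (U b x) = U (a + b) x := by
  rw [hU.2.1 a b, ContinuousLinearMap.comp_apply]

/-- Strong continuity upgrades to joint continuity because every `U t` is an isometry. -/
lemma continuous_uncurry (hU : IsUnitaryGroup U) : Continuous fun p : ℝ × H => U p.1 p.2 := by
  rw [continuous_iff_continuousAt]
  rintro ⟨t₀, x₀⟩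
  have h_small : Tendsto (fun p : ℝ × H => U p.1 (p.2 - x₀)) (𝓝 (t₀, x₀)) (𝓝 0) := by
    refine squeeze_zero_norm (fun p => (hU.norm_apply _ _).le) ?_
    simpa using ((continuous_snd.sub continuous_const).norm.tendsto (t₀, x₀) :
      Tendsto (fun p : ℝ × H => ‖p.2 - x₀‖) _ _)
  have h_orbit : Tendsto (fun p : ℝ × H => U p.1 x₀) (𝓝 (t₀, x₀)) (𝓝 (U t₀ x₀)) :=
    ((hU.2.2.2 x₀).comp continuous_fst).continuousAt
  simpa [ContinuousAt] using h_small.add h_orbit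

lemma aestronglyMeasurable_duhamel (hU : IsUnitaryGroup U) {u : ℝ → H}
    (hu : AEStronglyMeasurable u volume) (τ : ℝ) :
    AEStronglyMeasurable (fun s => U (τ - s) (B (u s))) volume :=
  hU.continuous_uncurry.comp_aestronglyMeasurable
    ((continuous_const.sub continuous_id).aestronglyMeasurable.prodMk
      (B.continuous.comp_aestronglyMeasurable hu))

lemma ae_restrict_norm_duhamel_le (hU : IsUnitaryGroup U) {u : ℝ → H} {a b c : ℝ}
    (hbd : ∀ᵐ t ∂volume, t ∈ Ioo a b → ‖u t‖ ≤ c) (τ : ℝ) :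
    ∀ᵐ s ∂volume.restrict (Ioo a b), ‖U (τ - s) (B (u s))‖ ≤ ‖B‖ * c := by
  rw [ae_restrict_iff' measurableSet_Ioo]
  filter_upwards [hbd] with s hs hmem
  rw [hU.norm_apply]
  exact B.le_opNorm_of_le (hs hmem)

lemma integrableOn_duhamel (hU : IsUnitaryGroup U) {u : ℝ → H} {a b : ℝ}
    (hu : MemLinfty u a b) (τ : ℝ) :
    IntegrableOn (fun s => U (τ - s) (B (u s))) (Ioo a b) volume := by
  obtain ⟨hu_meas, c, hc⟩ := hu
  exact Integrable.mono' (integrableOn_const measure_Ioo_lt_top.ne)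
    (hU.aestronglyMeasurable_duhamel hu_meas τ).restrict (hU.ae_restrict_norm_duhamel_le hc τ)

lemma norm_setIntegral_duhamel_le (hU : IsUnitaryGroup U) {u : ℝ → H} {a b c : ℝ}
    (hab : a ≤ b) (hbd : ∀ᵐ t ∂volume, t ∈ Ioo a b → ‖u t‖ ≤ c) (τ : ℝ) :
    ‖∫ s in Ioo a b, U (τ - s) (B (u s))‖ ≤ (b - a) * (‖B‖ * c) := by
  calc ‖∫ s in Ioo a b, U (τ - s) (B (u s))‖ ≤ ∫ _ in Ioo a b, ‖B‖ * c :=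
        norm_integral_le_of_norm_le (integrableOn_const measure_Ioo_lt_top.ne)
          (hU.ae_restrict_norm_duhamel_le hbd τ)
    _ = (b - a) * (‖B‖ * c) := by
        rw [setIntegral_const, Real.volume_real_Ioo_of_le hab, smul_eq_mul]

lemma norm_le_of_stateT_eq_zero (hU : IsUnitaryGroup U) {u : ℝ → H} {y₀ : H} {s c : ℝ}
    (hs : 0 ≤ s) (hbd : ∀ᵐ t ∂volume, t ∈ Ioo 0 s → ‖u t‖ ≤ c)
    (h : stateT U B s 0 u y₀ = 0) : ‖y₀‖ ≤ ‖B‖ * s * c := by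
  have h_int : ∫ t in Ioo 0 s, U (s - t) (B (u t)) = -U s y₀ := eq_neg_of_add_eq_zero_right h
  have := hU.norm_setIntegral_duhamel_le (B := B) hs hbd s
  rw [h_int, norm_neg, hU.norm_apply, sub_zero] at this
  linarith

end IsUnitaryGroup

lemma supNorm_nonneg (u : ℝ → H) (a b : ℝ) : 0 ≤ supNorm u a b :=
  Real.sInf_nonneg fun _ hc => hc.1

lemma supNorm_le {u : ℝ → H} {a b c : ℝ} (hc : 0 ≤ c)
    (hbd : ∀ᵐ t ∂volume, t ∈ Ioo a b → ‖u t‖ ≤ c) : supNorm u a b ≤ c :=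
  csInf_le ⟨0, fun _ hx => hx.1⟩ ⟨hc, hbd⟩

lemma MemLinfty.ae_norm_le_supNorm {u : ℝ → H} {a b : ℝ} (hu : MemLinfty u a b) :
    ∀ᵐ t ∂volume, t ∈ Ioo a b → ‖u t‖ ≤ supNorm u a b := by
  obtain ⟨-, c, hc⟩ := hu
  set S := {c : ℝ | 0 ≤ c ∧ ∀ᵐ t ∂volume, t ∈ Ioo a b → ‖u t‖ ≤ c}
  have hS : S.Nonempty :=
    ⟨max c 0, le_max_right _ _, hc.mono fun t ht hmem => (ht hmem).trans (le_max_left _ _)⟩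
  -- countably many bounds approaching the infimum hold simultaneously almost everywhere
  have h_approx (n : ℕ) : ∃ c ∈ S, c < supNorm u a b + 1 / (n + 1) :=
    exists_lt_of_csInf_lt hS (lt_add_of_pos_right _ (by positivity))
  choose cs hcs hlt using h_approx
  filter_upwards [ae_all_iff.2 fun n => (hcs n).2] with t ht hmem
  refine le_of_forall_pos_le_add fun ε hε => ?_
  obtain ⟨n, hn⟩ := exists_nat_one_div_lt hε
  linarith [ht n hmem, hlt n]

lemma bddBelow_image_supNorm (S : Set (ℝ → H)) (a b : ℝ) :
    BddBelow ((fun v => supNorm v a b) '' S) :=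
  ⟨0, by rintro _ ⟨v, -, rfl⟩; exact supNorm_nonneg v a b⟩

lemma stateT_congr {u v : ℝ → H} {T τ : ℝ} (h : EqOn u v (Ioo τ T)) (y₀ : H) :
    stateT U B T τ u y₀ = stateT U B T τ v y₀ := by
  unfold stateT
  congr 1
  exact setIntegral_congr_fun measurableSet_Ioo fun s hs => by rw [h hs]

lemma stateT_smul (l : ℝ) (u : ℝ → H) (T τ : ℝ) (y₀ : H) :
    stateT U B T τ (l • u) y₀ = l • stateT U B T τ u y₀ + (1 - l) • U T y₀ := by
  simp only [stateT, Pi.smul_apply, ContinuousLinearMap.map_smul_of_tower, integral_smul]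
  module

lemma VTset_nonempty (hEC : EC U B) (y₀ : H) {T : ℝ} (hT : 0 < T) :
    (VTset U B y₀ T).Nonempty := by
  obtain ⟨C, -, hsteer⟩ := hEC T hT
  obtain ⟨u, hu_meas, hu_bd, hu_state⟩ := hsteer y₀ 0
  exact ⟨u, ⟨hu_meas, _, hu_bd⟩, hu_state⟩

def concatControl (T₁ : ℝ) (v u : ℝ → H) : ℝ → H :=
  (Iic T₁).piecewise v fun t => u (t - T₁)

section concatControl

variable {T₁ δ : ℝ} {v u : ℝ → H}

lemma concatControl_of_le {t : ℝ} (ht : t ≤ T₁) : concatControl T₁ v u t = v t :=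
  piecewise_eq_of_mem _ _ _ ht

lemma concatControl_of_lt {t : ℝ} (ht : T₁ < t) : concatControl T₁ v u t = u (t - T₁) :=
  piecewise_eq_of_notMem _ _ _ (not_le.2 ht)

lemma ae_norm_concatControl_le {c₁ c₂ : ℝ} (hv : ∀ᵐ t ∂volume, t ∈ Ioo 0 T₁ → ‖v t‖ ≤ c₁)
    (hu : ∀ᵐ t ∂volume, t ∈ Ioo 0 δ → ‖u t‖ ≤ c₂) :
    ∀ᵐ t ∂volume, t ∈ Ioo 0 (T₁ + δ) → ‖concatControl T₁ v u t‖ ≤ max c₁ c₂ := by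
  have hu' := (measurePreserving_sub_right volume T₁).quasiMeasurePreserving.ae hu
  filter_upwards [hv, hu', volume.ae_ne T₁] with t hvt hut hne ht
  rcases hne.lt_or_gt with hlt | hgt
  · rw [concatControl_of_le hlt.le]
    exact (hvt ⟨ht.1, hlt⟩).trans (le_max_left _ _)
  · rw [concatControl_of_lt hgt]
    exact (hut ⟨sub_pos.2 hgt, by linarith [ht.2]⟩).trans (le_max_right _ _)

lemma MemLinfty.concatControl (hv : MemLinfty v 0 T₁) (hu : MemLinfty u 0 δ) :
    MemLinfty (concatControl T₁ v u) 0 (T₁ + δ) := by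
  obtain ⟨hv_meas, c₁, hc₁⟩ := hv
  obtain ⟨hu_meas, c₂, hc₂⟩ := hu
  refine ⟨hv_meas.restrict.piecewise measurableSet_Iic ?_, _, ae_norm_concatControl_le hc₁ hc₂⟩
  exact (hu_meas.comp_quasiMeasurePreserving
    (measurePreserving_sub_right volume T₁).quasiMeasurePreserving).restrict

lemma stateT_concatControl (hU : IsUnitaryGroup U) (hv : MemLinfty v 0 T₁) (hu : MemLinfty u 0 δ)
    (hT₁ : 0 ≤ T₁) (hδ : 0 ≤ δ) (y₀ : H) :
    stateT U B (T₁ + δ) 0 (concatControl T₁ v u) y₀ = stateT U B δ 0 u (stateT U B T₁ 0 v y₀) := by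
  have h_int : IntervalIntegrable (fun s => U (T₁ + δ - s) (B (concatControl T₁ v u s)))
      volume 0 (T₁ + δ) :=
    (intervalIntegrable_iff_integrableOn_Ioo_of_le (by linarith)).2
      (hU.integrableOn_duhamel (hv.concatControl hu) _)
  have h_first : ∫ s in 0..T₁, U (T₁ + δ - s) (B (concatControl T₁ v u s))
      = U δ (∫ s in Ioo 0 T₁, U (T₁ - s) (B (v s))) := by
    rw [← ContinuousLinearMap.integral_comp_comm _ (hU.integrableOn_duhamel hv T₁),
      intervalIntegral.integral_of_le hT₁, ← integral_Ioc_eq_integral_Ioo]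
    refine setIntegral_congr_fun measurableSet_Ioc fun s hs => ?_
    rw [concatControl_of_le hs.2, hU.apply_apply]
    ring_nf
  have h_second : ∫ s in T₁..T₁ + δ, U (T₁ + δ - s) (B (concatControl T₁ v u s))
      = ∫ r in Ioo 0 δ, U (δ - r) (B (u r)) := by
    have h_shift : ∫ s in T₁..T₁ + δ, U (T₁ + δ - s) (B (concatControl T₁ v u s))
        = ∫ s in T₁..T₁ + δ, U (δ - (s - T₁)) (B (u (s - T₁))) := by
      rw [intervalIntegral.integral_of_le (by linarith),
        intervalIntegral.integral_of_le (by linarith)]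
      refine setIntegral_congr_fun measurableSet_Ioc fun s hs => ?_
      rw [concatControl_of_lt hs.1]
      ring_nf
    rw [h_shift, intervalIntegral.integral_comp_sub_right (fun r => U (δ - r) (B (u r))),
      sub_self, add_sub_cancel_left, intervalIntegral.integral_of_le hδ,
      integral_Ioc_eq_integral_Ioo]
  have h_split := intervalIntegral.integral_add_adjacent_intervals
    (h_int.mono_set (uIcc_subset_uIcc_left (mem_uIcc_of_le hT₁ (by linarith))))
    (h_int.mono_set (uIcc_subset_uIcc_right (mem_uIcc_of_le hT₁ (by linarith))))
  rw [h_first, h_second, intervalIntegral.integral_of_le (by linarith),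
    integral_Ioc_eq_integral_Ioo] at h_split
  simp only [stateT, map_add, hU.apply_apply, add_comm δ T₁, ← h_split]
  abel

end concatControl

variable {y₀ : H}

lemma stateT_indicator_Ioo (v : ℝ → H) (T τ : ℝ) :
    stateT U B T τ ((Ioo τ T).indicator v) y₀ = stateT U B T τ v y₀ :=
  stateT_congr (fun _ ht => indicator_of_mem ht v) y₀

lemma Mmin_le_supNorm {T : ℝ} {v : ℝ → H} (hv : v ∈ VTset U B y₀ T) :
    Mmin U B y₀ T ≤ supNorm v 0 T :=
  csInf_le (bddBelow_image_supNorm _ 0 T) ⟨v, hv, rfl⟩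

lemma norm_le_mul_Mmin (hU : IsUnitaryGroup U) (hEC : EC U B) {T : ℝ} (hT : 0 < T) :
    ‖y₀‖ ≤ ‖B‖ * T * Mmin U B y₀ T :=
  le_mul_csInf_of_forall_le ((VTset_nonempty hEC y₀ hT).image _) (by positivity)
    (by
      rintro _ ⟨v, hv, rfl⟩
      exact hU.norm_le_of_stateT_eq_zero hT.le hv.1.ae_norm_le_supNorm hv.2)

lemma Mmin_pos (hU : IsUnitaryGroup U) (hEC : EC U B) (hy₀ : y₀ ≠ 0) {T : ℝ} (hT : 0 < T) :
    0 < Mmin U B y₀ T :=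
  pos_of_mul_pos_right ((norm_pos_iff.2 hy₀).trans_le (norm_le_mul_Mmin hU hEC hT))
    (by positivity)

lemma norm_le_mul_Tmin (hU : IsUnitaryGroup U) (hET : ET U B) (hy₀ : y₀ ≠ 0) {M : ℝ}
    (hM : 0 < M) : ‖y₀‖ ≤ ‖B‖ * M * Tmin U B y₀ M := by
  obtain ⟨u, hu, -⟩ := hET y₀ hy₀ M hM
  obtain ⟨s, hs, hs_state⟩ := hu.2.2
  refine le_mul_csInf_of_forall_le ?_ (by positivity) ?_
  · exact ⟨s, hs, u, hu, hs_state⟩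
  · rintro s ⟨hs, u, hu, hs_state⟩
    rw [mul_right_comm]
    exact hU.norm_le_of_stateT_eq_zero hs.le (hu.2.1.mono fun t ht hmem => ht hmem.1) hs_state

lemma Tmin_pos (hU : IsUnitaryGroup U) (hET : ET U B) (hy₀ : y₀ ≠ 0) {M : ℝ} (hM : 0 < M) :
    0 < Tmin U B y₀ M :=
  pos_of_mul_pos_right ((norm_pos_iff.2 hy₀).trans_le (norm_le_mul_Tmin hU hET hy₀ hM))
    (by positivity)

/-- Scaling an exact control of `(NOCP)_{T₁}` by `1 - a` leaves the fraction `a` of the free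
evolution at time `T₁`; (EC) removes it during the extra time `δ` at cost `C a ‖y₀‖`. -/
lemma exists_Mmin_add_le (hU : IsUnitaryGroup U) (hEC : EC U B) {T₁ δ : ℝ} (hT₁ : 0 < T₁)
    (hδ : 0 < δ) : ∃ C > 0, ∀ a ∈ Icc (0 : ℝ) 1,
      Mmin U B y₀ (T₁ + δ) ≤ max ((1 - a) * Mmin U B y₀ T₁) (C * (a * ‖y₀‖)) := by
  obtain ⟨C, hC, hsteer⟩ := hEC δ hδ
  refine ⟨C, hC, fun a ⟨ha₀, ha₁⟩ => ?_⟩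
  set f : ℝ → ℝ := fun m => max ((1 - a) * m) (C * (a * ‖y₀‖))
  have h_each (v : ℝ → H) (hv : v ∈ VTset U B y₀ T₁) :
      Mmin U B y₀ (T₁ + δ) ≤ f (supNorm v 0 T₁) := by
    have hv_bd : ∀ᵐ t ∂volume, t ∈ Ioo 0 T₁ → ‖((1 - a) • v) t‖ ≤ (1 - a) * supNorm v 0 T₁ := by
      filter_upwards [hv.1.ae_norm_le_supNorm] with t ht hmem
      rw [Pi.smul_apply, norm_smul, Real.norm_of_nonneg (by linarith)]
      exact mul_le_mul_of_nonneg_left (ht hmem) (by linarith)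
    have h_mid : stateT U B T₁ 0 ((1 - a) • v) y₀ = a • U T₁ y₀ := by
      rw [stateT_smul, hv.2, smul_zero, zero_add, sub_sub_cancel]
    obtain ⟨u, hu_meas, hu_bd, hu_state⟩ := hsteer (a • U T₁ y₀) 0
    rw [zero_sub, norm_neg, hU.norm_apply, norm_smul, hU.norm_apply,
      Real.norm_of_nonneg ha₀] at hu_bd
    have hw : concatControl T₁ ((1 - a) • v) u ∈ VTset U B y₀ (T₁ + δ) := by
      have hv' : MemLinfty ((1 - a) • v) 0 T₁ := ⟨hv.1.1.const_smul _, _, hv_bd⟩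
      have hu' : MemLinfty u 0 δ := ⟨hu_meas, _, hu_bd⟩
      refine ⟨hv'.concatControl hu', ?_⟩
      rw [stateT_concatControl hU hv' hu' hT₁.le hδ.le, h_mid, hu_state]
    exact (Mmin_le_supNorm hw).trans
      (supNorm_le (le_max_of_le_right (by positivity)) (ae_norm_concatControl_le hv_bd hu_bd))
  have hf_mono : Monotone f := fun m m' h =>
    max_le_max (mul_le_mul_of_nonneg_left h (by linarith)) le_rfl
  have hf_cont : Continuous f := by fun_prop
  calc Mmin U B y₀ (T₁ + δ)
      ≤ sInf (f '' ((fun v => supNorm v 0 T₁) '' VTset U B y₀ T₁)) :=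
        le_csInf (((VTset_nonempty hEC y₀ hT₁).image _).image f)
          (by rintro _ ⟨_, ⟨v, hv, rfl⟩, rfl⟩; exact h_each v hv)
    _ = f (Mmin U B y₀ T₁) :=
        (hf_mono.map_csInf_of_continuousAt hf_cont.continuousAt
          ((VTset_nonempty hEC y₀ hT₁).image _) (bddBelow_image_supNorm _ 0 T₁)).symm

lemma Mmin_strictAntiOn (hU : IsUnitaryGroup U) (hEC : EC U B) (hy₀ : y₀ ≠ 0) :
    StrictAntiOn (Mmin U B y₀) (Ioi 0) := by
  intro T₁ hT₁ T₂ _ h12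
  obtain ⟨C, hC, hle⟩ := exists_Mmin_add_le (y₀ := y₀) hU hEC hT₁ (sub_pos.2 h12)
  rw [add_sub_cancel] at hle
  set M₁ := Mmin U B y₀ T₁
  have hM₁ : 0 < M₁ := Mmin_pos hU hEC hy₀ hT₁
  set K := C * ‖y₀‖
  have hK : 0 ≤ K := by positivity
  -- any `a ∈ (0, 1]` with `K * a < M₁` does
  refine (hle (M₁ / (M₁ + K)) ⟨by positivity, div_le_one_of_le₀ (by linarith) (by positivity)⟩
    ).trans_lt (max_lt ?_ ?_)
  · have : 0 < M₁ / (M₁ + K) := by positivity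
    nlinarith
  · calc C * (M₁ / (M₁ + K) * ‖y₀‖) = M₁ * (K / (M₁ + K)) := by ring
      _ < M₁ * 1 := mul_lt_mul_of_pos_left ((div_lt_one (by positivity)).2 (by linarith)) hM₁
      _ = M₁ := mul_one M₁

lemma Mmin_Tmin_le (hET : ET U B) (hy₀ : y₀ ≠ 0) {M : ℝ} (hM : 0 < M) :
    Mmin U B y₀ (Tmin U B y₀ M) ≤ M := by
  obtain ⟨u, ⟨⟨hu_meas, c, hc⟩, hu_bd, -⟩, hu_state⟩ := hET y₀ hy₀ M hM
  have hu : u ∈ VTset U B y₀ (Tmin U B y₀ M) :=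
    ⟨⟨hu_meas, c, hc.mono fun t ht hmem => ht hmem.1⟩, hu_state⟩
  exact (Mmin_le_supNorm hu).trans (supNorm_le hM.le (hu_bd.mono fun t ht hmem => ht hmem.1))

lemma indicator_mem_UMset {T M : ℝ} (hT : 0 < T) {v : ℝ → H} (hv : v ∈ VTset U B y₀ T)
    (hvM : supNorm v 0 T ≤ M) : (Ioo 0 T).indicator v ∈ UMset U B y₀ M := by
  have h_bd : ∀ᵐ t ∂volume, ‖(Ioo 0 T).indicator v t‖ ≤ M := by
    filter_upwards [hv.1.ae_norm_le_supNorm] with t ht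
    rw [norm_indicator_eq_indicator_norm]
    exact indicator_apply_le' (fun hmem => (ht hmem).trans hvM)
      fun _ => (supNorm_nonneg v 0 T).trans hvM
  refine ⟨⟨hv.1.1.indicator measurableSet_Ioo, M, h_bd.mono fun t ht _ => ht⟩,
    h_bd.mono fun t ht _ => ht, T, hT, ?_⟩
  rw [stateT_indicator_Ioo, hv.2]

lemma le_Mmin_Tmin (hU : IsUnitaryGroup U) (hEC : EC U B) (hBB : BB U B) (hET : ET U B)
    (hy₀ : y₀ ≠ 0) {M : ℝ} (hM : 0 < M) : M ≤ Mmin U B y₀ (Tmin U B y₀ M) := by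
  set T := Tmin U B y₀ M
  have hT : 0 < T := Tmin_pos hU hET hy₀ hM
  by_contra! hlt
  obtain ⟨_, ⟨v, hv, rfl⟩, hvM⟩ := exists_lt_of_csInf_lt ((VTset_nonempty hEC y₀ hT).image _) hlt
  have h_bang := hBB y₀ hy₀ M hM _ (indicator_mem_UMset hT hv hvM.le)
    (by rw [stateT_indicator_Ioo, hv.2])
  have h_null : ∀ᵐ t ∂volume, t ∉ Ioo 0 T := by
    filter_upwards [h_bang, hv.1.ae_norm_le_supNorm] with t h_eq h_le hmem
    rw [indicator_of_mem hmem] at h_eq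
    linarith [h_eq hmem, h_le hmem]
  have h_vol := measure_eq_zero_iff_ae_notMem.2 h_null
  rw [Real.volume_Ioo, ENNReal.ofReal_eq_zero] at h_vol
  linarith

end

theorem minimal_time_minimal_norm_inverse_general
    (U : ℝ → H →L[ℂ] H) (B : H →L[ℂ] H) (hU : IsUnitaryGroup U)
    (hEC : EC U B) (hBB : BB U B) (hET : ET U B)
    (y₀ : H) (hy₀ : y₀ ≠ 0) :
    (∀ T : ℝ, 0 < T → Tmin U B y₀ (Mmin U B y₀ T) = T) ∧
    (∀ M : ℝ, 0 < M → Mmin U B y₀ (Tmin U B y₀ M) = M) ∧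
    InvOn (Mmin U B y₀) (Tmin U B y₀) (Ioi (0 : ℝ)) (Ioi (0 : ℝ)) := by
  have hMT (M : ℝ) (hM : 0 < M) : Mmin U B y₀ (Tmin U B y₀ M) = M :=
    le_antisymm (Mmin_Tmin_le hET hy₀ hM) (le_Mmin_Tmin hU hEC hBB hET hy₀ hM)
  have hTM (T : ℝ) (hT : 0 < T) : Tmin U B y₀ (Mmin U B y₀ T) = T :=
    have hMT_pos := Mmin_pos hU hEC hy₀ hT
    (Mmin_strictAntiOn hU hEC hy₀).injOn (Tmin_pos hU hET hy₀ hMT_pos) hT (hMT _ hMT_pos)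
  exact ⟨hTM, hMT, hMT, hTM⟩

theorem minimal_time_minimal_norm_inverse
    (U : ℝ → H →L[ℂ] H) (B : H →L[ℂ] H) (hU : IsUnitaryGroup U) (hB : IsOrthProj B)
    (hEC : EC U B) (hECrev : EC (fun t => U (-t)) B)
    (hBB : BB U B) (hBBrev : BB (fun t => U (-t)) B)
    (hET : ET U B) (hETrev : ET (fun t => U (-t)) B)
    (y₀ : H) (hy₀ : y₀ ≠ 0) :
    (∀ T : ℝ, 0 < T → Tmin U B y₀ (Mmin U B y₀ T) = T) ∧
    (∀ M : ℝ, 0 < M → Mmin U B y₀ (Tmin U B y₀ M) = M) ∧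
    InvOn (Mmin U B y₀) (Tmin U B y₀) (Ioi (0 : ℝ)) (Ioi (0 : ℝ)) :=
  minimal_time_minimal_norm_inverse_general U B hU hEC hBB hET y₀ hy₀
end
end

section
/- Assume hypothesis (EC). For every τ ∈ [0,T) and M ≥ 0: (i) the problem (OP)^{M,τ} has an optimal control, i.e., there exists u* ∈ U_{M,τ} with ‖y(T;χ_{(τ,T)}u*,y₀) − z_d‖ = r(M,τ); (ii) if moreover M < M^τ, then r(M,τ) > 0. -/
open MeasureTheory Set Filter Topology

noncomputable section

variable {H : Type*} [NormedAddCommGroup H] [InnerProductSpace ℂ H] [CompleteSpace H]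
  [SecondCountableTopology H]

/-!
Read in `L²((τ,T); H)`, the admissible controls form a closed, bounded, convex set `C`, and
`f ↦ ‖∫_τ^T U(T-s) B f(s) ds + U(T)y₀ - z_d‖` is a continuous convex function on it. Its
sublevel sets at levels decreasing to the infimum are nested nonempty closed bounded convex sets,
and such sets have a common point in a Hilbert space; that point is an optimal control. If
`r(M,τ) = 0`, that control steers `y₀` exactly to `z_d` with norm at most `M`, whence `M^τ ≤ M`.
-/

section Hilbert

variable {F : Type*} [NormedAddCommGroup F] [InnerProductSpace ℝ F] [CompleteSpace F]

theorem exists_norm_le_of_isClosed_convex {K : Set F} (hne : K.Nonempty) (hcl : IsClosed K)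
    (hconv : Convex ℝ K) : ∃ v ∈ K, ∀ w ∈ K, ‖v‖ ≤ ‖w‖ := by
  obtain ⟨v, hv, hmin⟩ := exists_norm_eq_iInf_of_complete_convex hne hcl.isComplete hconv 0
  refine ⟨v, hv, fun w hw => ?_⟩
  have := ciInf_le (f := fun x : K => ‖0 - (x : F)‖) ⟨0, by rintro _ ⟨x, rfl⟩; positivity⟩ ⟨w, hw⟩
  simp only [zero_sub, norm_neg] at hmin this
  exact hmin ▸ this

/-- The minimal-norm points `vₙ ∈ Kₙ` form a Cauchy sequence: for `m ≤ n` the midpoint of `vₘ`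
and `vₙ` lies in `Kₘ`, and the parallelogram law gives `‖vₙ - vₘ‖² ≤ 2 (‖vₙ‖² - ‖vₘ‖²)`. -/
theorem Convex.nonempty_iInter_of_antitone {K : ℕ → Set F} (hanti : Antitone K)
    (hne : ∀ n, (K n).Nonempty) (hcl : ∀ n, IsClosed (K n)) (hconv : ∀ n, Convex ℝ (K n))
    (hbdd : Bornology.IsBounded (K 0)) : (⋂ n, K n).Nonempty := by
  choose v hvK hvmin using fun n => exists_norm_le_of_isClosed_convex (hne n) (hcl n) (hconv n)
  have hdist : ∀ m n, m ≤ n → ‖v n - v m‖ ^ 2 ≤ 2 * (‖v n‖ ^ 2 - ‖v m‖ ^ 2) := by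
    intro m n hmn
    have hmid : ‖v m‖ ≤ ‖(2⁻¹ : ℝ) • (v m + v n)‖ := hvmin m _ <| by
      rw [smul_add]
      exact hconv m (hvK m) (hanti hmn (hvK n)) (by norm_num) (by norm_num) (by norm_num)
    rw [norm_smul, Real.norm_of_nonneg (by norm_num)] at hmid
    have hpar := parallelogram_law_with_norm ℝ (v m) (v n)
    rw [norm_sub_rev]
    nlinarith [norm_nonneg (v m)]
  have hmono : Monotone fun n => ‖v n‖ ^ 2 := fun m n hmn =>
    pow_le_pow_left₀ (norm_nonneg _) (hvmin m _ (hanti hmn (hvK n))) 2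
  obtain ⟨R, hR⟩ := hbdd.exists_norm_le
  have hbddAbove : BddAbove (range fun n => ‖v n‖ ^ 2) := by
    refine ⟨R ^ 2, ?_⟩
    rintro _ ⟨n, rfl⟩
    exact pow_le_pow_left₀ (norm_nonneg _) (hR _ (hanti (Nat.zero_le n) (hvK n))) 2
  set L := ⨆ n, ‖v n‖ ^ 2
  have hlim : Tendsto (fun n => ‖v n‖ ^ 2) atTop (𝓝 L) := tendsto_atTop_ciSup hmono hbddAbove
  have hcauchy : CauchySeq v := by
    refine Metric.cauchySeq_iff'.2 fun ε hε => ?_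
    obtain ⟨N, hN⟩ := eventually_atTop.1 <| hlim.eventually <|
      lt_mem_nhds (show L - ε ^ 2 / 2 < L by linarith [pow_pos hε 2])
    refine ⟨N, fun n hn => ?_⟩
    have hvn : ‖v n‖ ^ 2 ≤ L := le_ciSup hbddAbove n
    rw [dist_eq_norm]
    exact lt_of_pow_lt_pow_left₀ 2 hε.le (by linarith [hdist N n hn, hN N le_rfl])
  obtain ⟨x, hx⟩ := cauchySeq_tendsto_of_complete hcauchy
  exact ⟨x, mem_iInter.2 fun n => (hcl n).mem_of_tendsto hx
    (eventually_atTop.2 ⟨n, fun m hm => hanti hm (hvK m)⟩)⟩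

theorem ConvexOn.exists_isMinOn_of_isBounded {C : Set F} {g : F → ℝ} (hg : ConvexOn ℝ C g)
    (hne : C.Nonempty) (hcl : IsClosed C) (hbdd : Bornology.IsBounded C)
    (hgc : ContinuousOn g C) (hbelow : BddBelow (g '' C)) : ∃ x ∈ C, IsMinOn g C x := by
  obtain ⟨ρ, hρanti, hρgt, hρlim⟩ := exists_seq_strictAnti_tendsto (sInf (g '' C))
  have hnonempty : ∀ n, ({x ∈ C | g x ≤ ρ n}).Nonempty := fun n => by
    obtain ⟨_, ⟨x, hx, rfl⟩, hlt⟩ := exists_lt_of_csInf_lt (hne.image g) (hρgt n)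
    exact ⟨x, hx, hlt.le⟩
  obtain ⟨x, hx⟩ := Convex.nonempty_iInter_of_antitone (K := fun n => {x ∈ C | g x ≤ ρ n})
    (fun m n hmn x hx => ⟨hx.1, hx.2.trans (hρanti.antitone hmn)⟩) hnonempty
    (fun n => hgc.preimage_isClosed_of_isClosed hcl isClosed_Iic) (fun n => hg.convex_le _)
    (hbdd.subset fun x hx => hx.1)
  refine ⟨x, (mem_iInter.1 hx 0).1, fun y hy => ?_⟩
  have hle : g x ≤ sInf (g '' C) :=
    ge_of_tendsto hρlim (.of_forall fun n => (mem_iInter.1 hx n).2)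
  exact hle.trans (csInf_le hbelow ⟨y, hy, rfl⟩)

end Hilbert

section Lp

variable {α E : Type*} [MeasurableSpace α] [NormedAddCommGroup E] {μ : Measure α}

theorem isClosed_setOf_ae_norm_le {p : ENNReal} [Fact (1 ≤ p)] (M : ℝ) :
    IsClosed {f : Lp E p μ | ∀ᵐ s ∂μ, ‖f s‖ ≤ M} := by
  refine isSeqClosed_iff_isClosed.1 fun f g hf hlim => ?_
  obtain ⟨ns, -, hae⟩ := (tendstoInMeasure_of_tendsto_Lp hlim).exists_seq_tendsto_ae
  filter_upwards [hae, ae_all_iff.2 fun i => hf (ns i)] with s hs hbd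
  exact le_of_tendsto hs.norm (.of_forall hbd)

theorem convex_setOf_ae_norm_le [NormedSpace ℝ E] {p : ENNReal} (M : ℝ) :
    Convex ℝ {f : Lp E p μ | ∀ᵐ s ∂μ, ‖f s‖ ≤ M} := by
  intro f hf g hg a b ha hb hab
  show ∀ᵐ s ∂μ, _
  filter_upwards [Lp.coeFn_add (a • f) (b • g), Lp.coeFn_smul a f, Lp.coeFn_smul b g, hf, hg]
    with s hs hfs hgs hfM hgM
  rw [hs, Pi.add_apply, hfs, hgs]
  calc ‖(a • ⇑f) s + (b • ⇑g) s‖ ≤ a * ‖f s‖ + b * ‖g s‖ := by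
        refine (norm_add_le _ _).trans_eq ?_
        simp [norm_smul, abs_of_nonneg ha, abs_of_nonneg hb]
    _ ≤ a * M + b * M := by gcongr
    _ = M := by rw [← add_mul, hab, one_mul]

theorem exists_stronglyMeasurable_norm_le_ae_eq {f : α → E} {M : ℝ}
    (hf : AEStronglyMeasurable f μ) (hM : 0 ≤ M) (hbd : ∀ᵐ s ∂μ, ‖f s‖ ≤ M) :
    ∃ g : α → E, StronglyMeasurable g ∧ (∀ s, ‖g s‖ ≤ M) ∧ f =ᵐ[μ] g := by
  classical
  let A := {s | ‖hf.mk f s‖ ≤ M}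
  have hA : MeasurableSet A :=
    measurableSet_le hf.stronglyMeasurable_mk.norm.measurable measurable_const
  refine ⟨A.indicator (hf.mk f), hf.stronglyMeasurable_mk.indicator hA, fun s => ?_, ?_⟩
  · by_cases hs : s ∈ A
    · rw [indicator_of_mem hs]; exact hs
    · rw [indicator_of_notMem hs, norm_zero]; exact hM
  · filter_upwards [hf.ae_eq_mk, hbd] with s hs hsM
    have hsA : s ∈ A := show ‖hf.mk f s‖ ≤ M from hs ▸ hsM
    rw [indicator_of_mem hsA, hs]

theorem Lp.integral_norm_le [IsFiniteMeasure μ] (f : Lp E 2 μ) :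
    ∫ s, ‖f s‖ ∂μ ≤ (μ univ ^ (2⁻¹ : ℝ)).toReal * ‖f‖ := by
  rw [integral_norm_eq_lintegral_enorm (Lp.aestronglyMeasurable f),
    ← eLpNorm_one_eq_lintegral_enorm, Lp.norm_def, ← ENNReal.toReal_mul, mul_comm]
  refine ENNReal.toReal_mono (by finiteness) ?_
  have := eLpNorm_le_eLpNorm_mul_rpow_measure_univ (p := 1) (q := 2) one_le_two
    (Lp.aestronglyMeasurable f)
  norm_num at this
  simpa only [one_div] using this

end Lp

section Admissible

variable {E : Type*} [NormedAddCommGroup E] {M τ T : ℝ}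

theorem UadmSet.exists_Lp_ae_eq {u : ℝ → E} (hu : u ∈ UadmSet M τ T) :
    ∃ f : Lp E 2 (volume.restrict (Ioo τ T)),
      (∀ᵐ s ∂volume.restrict (Ioo τ T), ‖f s‖ ≤ M) ∧ ⇑f =ᵐ[volume.restrict (Ioo τ T)] u := by
  have hbd : ∀ᵐ s ∂volume.restrict (Ioo τ T), ‖u s‖ ≤ M :=
    (ae_restrict_iff' measurableSet_Ioo).2 hu.2
  have hmem : MemLp u 2 (volume.restrict (Ioo τ T)) := .of_bound hu.1.1.restrict M hbd
  refine ⟨hmem.toLp u, ?_, hmem.coeFn_toLp⟩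
  filter_upwards [hmem.coeFn_toLp, hbd] with s hs hsM
  rwa [hs]

theorem exists_mem_UadmSet_ae_eq {f : ℝ → E}
    (hf : AEStronglyMeasurable f (volume.restrict (Ioo τ T))) (hM : 0 ≤ M)
    (hbd : ∀ᵐ s ∂volume.restrict (Ioo τ T), ‖f s‖ ≤ M) :
    ∃ u ∈ UadmSet M τ T, f =ᵐ[volume.restrict (Ioo τ T)] u := by
  obtain ⟨u, hum, hubd, hfu⟩ := exists_stronglyMeasurable_norm_le_ae_eq hf hM hbd
  exact ⟨u, ⟨⟨hum.aestronglyMeasurable, M, .of_forall fun t _ => hubd t⟩,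
    .of_forall fun t _ => hubd t⟩, hfu⟩

end Admissible

section UnitaryGroup

variable {E : Type*} [NormedAddCommGroup E] [InnerProductSpace ℂ E] {U : ℝ → E →L[ℂ] E}

/-- Strong continuity upgrades to joint continuity because the `U t` are isometries. -/
theorem IsUnitaryGroup.continuous_uncurry_s5 (hU : IsUnitaryGroup U) :
    Continuous fun p : ℝ × E => U p.1 p.2 := by
  obtain ⟨-, -, hnorm, hcont⟩ := hU
  refine continuous_iff_continuousAt.2 fun ⟨t₀, x₀⟩ => ?_
  have hsmall : Tendsto (fun p : ℝ × E => U p.1 (p.2 - x₀)) (𝓝 (t₀, x₀)) (𝓝 0) := by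
    rw [tendsto_zero_iff_norm_tendsto_zero]
    simp only [hnorm]
    simpa using ((continuous_snd.sub continuous_const).norm.tendsto (t₀, x₀) :
      Tendsto (fun p : ℝ × E => ‖p.2 - x₀‖) _ _)
  simpa [ContinuousAt] using hsmall.add (((hcont x₀).comp continuous_fst).tendsto (t₀, x₀))

theorem IsUnitaryGroup.norm_apply_le (hU : IsUnitaryGroup U) (B : E →L[ℂ] E) (t : ℝ) (x : E) :
    ‖U t (B x)‖ ≤ ‖B‖ * ‖x‖ :=
  (hU.2.2.1 t (B x)).trans_le (B.le_opNorm x)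

theorem IsUnitaryGroup.integrable_apply (hU : IsUnitaryGroup U) (B : E →L[ℂ] E) (T : ℝ)
    {μ : Measure ℝ} {f : ℝ → E} (hf : Integrable f μ) :
    Integrable (fun s => U (T - s) (B (f s))) μ :=
  (hf.norm.const_mul ‖B‖).mono'
    (hU.continuous_uncurry_s5.comp_aestronglyMeasurable
      ((measurable_const.sub measurable_id).aestronglyMeasurable.prodMk
        (B.continuous.comp_aestronglyMeasurable hf.1)))
    (.of_forall fun s => hU.norm_apply_le B (T - s) (f s))

theorem IsUnitaryGroup.exists_clm_eq_integral (hU : IsUnitaryGroup U) (B : E →L[ℂ] E) (T : ℝ)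
    (μ : Measure ℝ) [IsFiniteMeasure μ] :
    ∃ Φ : Lp E 2 μ →L[ℂ] E, ∀ f : Lp E 2 μ, Φ f = ∫ s, U (T - s) (B (f s)) ∂μ := by
  have hint : ∀ f : Lp E 2 μ, Integrable (fun s => U (T - s) (B (f s))) μ := fun f =>
    hU.integrable_apply B T ((Lp.memLp f).integrable one_le_two)
  let Φ : Lp E 2 μ →ₗ[ℂ] E :=
    { toFun := fun f => ∫ s, U (T - s) (B (f s)) ∂μ
      map_add' := fun f g => by
        rw [← integral_add (hint f) (hint g)]
        refine integral_congr_ae ((Lp.coeFn_add f g).mono fun s hs => ?_)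
        simp only [hs, Pi.add_apply, map_add]
      map_smul' := fun c f => by
        rw [RingHom.id_apply, ← integral_smul]
        refine integral_congr_ae ((Lp.coeFn_smul c f).mono fun s hs => ?_)
        simp only [hs, Pi.smul_apply, map_smul] }
  refine ⟨Φ.mkContinuous (‖B‖ * (μ univ ^ (2⁻¹ : ℝ)).toReal) fun f => ?_, fun f => rfl⟩
  calc ‖∫ s, U (T - s) (B (f s)) ∂μ‖ ≤ ∫ s, ‖B‖ * ‖f s‖ ∂μ :=
        norm_integral_le_of_norm_le (((Lp.memLp f).integrable one_le_two).norm.const_mul _)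
          (.of_forall fun s => hU.norm_apply_le B (T - s) (f s))
    _ ≤ ‖B‖ * (μ univ ^ (2⁻¹ : ℝ)).toReal * ‖f‖ := by
        rw [integral_const_mul, mul_assoc]
        exact mul_le_mul_of_nonneg_left (Lp.integral_norm_le f) (norm_nonneg B)

theorem IsUnitaryGroup.exists_isMinOn_stateT [CompleteSpace E] (hU : IsUnitaryGroup U)
    (B : E →L[ℂ] E) (y₀ z_d : E) (T τ : ℝ) {M : ℝ} (hM : 0 ≤ M) :
    ∃ u ∈ UadmSet M τ T, IsMinOn (fun u => ‖stateT U B T τ u y₀ - z_d‖) (UadmSet M τ T) u := by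
  let μ := volume.restrict (Ioo τ T)
  have : IsFiniteMeasure μ := isFiniteMeasure_restrict.2 measure_Ioo_lt_top.ne
  obtain ⟨Φ, hΦ⟩ := hU.exists_clm_eq_integral B T μ
  let d := U T y₀ - z_d
  let C := {f : Lp E 2 μ | ∀ᵐ s ∂μ, ‖f s‖ ≤ M}
  have hstate : ∀ (u : ℝ → E) (f : Lp E 2 μ), ⇑f =ᵐ[μ] u →
      stateT U B T τ u y₀ - z_d = Φ f + d := fun u f hfu => by
    have hint : ∫ s, U (T - s) (B (f s)) ∂μ = ∫ s, U (T - s) (B (u s)) ∂μ :=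
      integral_congr_ae (hfu.mono fun s hs => by simp only [hs])
    rw [hΦ, hint]
    simp only [stateT, d, μ]
    abel
  have hCbdd : Bornology.IsBounded C :=
    isBounded_iff_forall_norm_le.2 ⟨_, fun f hf => Lp.norm_le_of_ae_bound hM hf⟩
  have hconv : ConvexOn ℝ C fun f => ‖Φ f + d‖ :=
    (((convexOn_norm convex_univ).translate_left d).comp_linearMap
      (Φ.toLinearMap.restrictScalars ℝ)).subset (subset_univ C) (convex_setOf_ae_norm_le M)
  let := InnerProductSpace.rclikeToReal ℂ (Lp E 2 μ)
  obtain ⟨f, hfC, hfmin⟩ := hconv.exists_isMinOn_of_isBounded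
    ⟨0, (Lp.coeFn_zero E 2 μ).mono fun s hs => by rw [hs, Pi.zero_apply, norm_zero]; exact hM⟩
    (isClosed_setOf_ae_norm_le M) hCbdd (Φ.continuous.add continuous_const).norm.continuousOn
    ⟨0, by rintro _ ⟨g, -, rfl⟩; positivity⟩
  obtain ⟨u, hu, hfu⟩ := exists_mem_UadmSet_ae_eq (Lp.aestronglyMeasurable f) hM hfC
  refine ⟨u, hu, isMinOn_iff.2 fun v hv => ?_⟩
  obtain ⟨g, hgC, hgv⟩ := UadmSet.exists_Lp_ae_eq hv
  rw [hstate u f hfu, hstate v g hgv]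
  exact isMinOn_iff.1 hfmin g hgC

end UnitaryGroup

theorem supNorm_le_s5 {E : Type*} [NormedAddCommGroup E] {u : ℝ → E} {a b M : ℝ} (hM : 0 ≤ M)
    (hu : ∀ᵐ t, t ∈ Ioo a b → ‖u t‖ ≤ M) : supNorm u a b ≤ M :=
  csInf_le ⟨0, fun _ hc => hc.1⟩ ⟨hM, hu⟩

theorem Mtau_le {E : Type*} [NormedAddCommGroup E] [InnerProductSpace ℂ E]
    {U : ℝ → E →L[ℂ] E} {B : E →L[ℂ] E} {y₀ z_d : E} {T M τ : ℝ} {u : ℝ → E}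
    (hu : u ∈ UadmSet M τ T) (hM : 0 ≤ M) (hsteer : stateT U B T τ u y₀ = z_d) :
    Mtau U B y₀ z_d T τ ≤ M :=
  calc Mtau U B y₀ z_d T τ ≤ supNorm u τ T :=
        csInf_le ⟨0, by rintro _ ⟨v, -, rfl⟩; exact Real.sInf_nonneg fun c hc => hc.1⟩
          ⟨u, ⟨hu.1, hsteer⟩, rfl⟩
    _ ≤ M := supNorm_le_s5 hM hu.2

theorem op_has_optimal_control_and_positive_distance_general
    (U : ℝ → H →L[ℂ] H) (B : H →L[ℂ] H) (hU : IsUnitaryGroup U)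
    (T : ℝ) (y₀ z_d : H)
    (τ M : ℝ) (hM : 0 ≤ M) :
    (∃ u : ℝ → H, u ∈ UadmSet M τ T ∧
      ‖stateT U B T τ u y₀ - z_d‖ = rOP U B y₀ z_d T M τ) ∧
    (M < Mtau U B y₀ z_d T τ → 0 < rOP U B y₀ z_d T M τ) := by
  obtain ⟨u, hu, hmin⟩ := hU.exists_isMinOn_stateT B y₀ z_d T τ hM
  have hleast : IsLeast ((fun v => ‖stateT U B T τ v y₀ - z_d‖) '' UadmSet M τ T)
      ‖stateT U B T τ u y₀ - z_d‖ :=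
    ⟨⟨u, hu, rfl⟩, by rintro _ ⟨v, hv, rfl⟩; exact isMinOn_iff.1 hmin v hv⟩
  have hr : ‖stateT U B T τ u y₀ - z_d‖ = rOP U B y₀ z_d T M τ := hleast.csInf_eq.symm
  refine ⟨⟨u, hu, hr⟩, fun hlt => ?_⟩
  by_contra! hr0
  have hsteer : stateT U B T τ u y₀ = z_d := by
    rw [← sub_eq_zero, ← norm_le_zero_iff, hr]
    exact hr0
  linarith [Mtau_le hu hM hsteer]

theorem op_has_optimal_control_and_positive_distance
    (U : ℝ → H →L[ℂ] H) (B : H →L[ℂ] H) (hU : IsUnitaryGroup U) (hB : IsOrthProj B)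
    (hEC : EC U B) (hECrev : EC (fun t => U (-t)) B)
    (T : ℝ) (hT : 0 < T) (y₀ z_d : H) (hrT : 0 < ‖U T y₀ - z_d‖)
    (τ M : ℝ) (hτ : τ ∈ Ico (0 : ℝ) T) (hM : 0 ≤ M) :
    (∃ u : ℝ → H, u ∈ UadmSet M τ T ∧
      ‖stateT U B T τ u y₀ - z_d‖ = rOP U B y₀ z_d T M τ) ∧
    (M < Mtau U B y₀ z_d T τ → 0 < rOP U B y₀ z_d T M τ) :=
  op_has_optimal_control_and_positive_distance_general U B hU T y₀ z_d τ M hM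
end
end
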